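/- For the Lie algebra 𝒟⁻ (differential operators anti-fixed by σ_{-,0}) with grading 𝒟⁻_k = {t^k g(D + k/2) : g ∈ ℂ[w]^{(k̄)}}, one has [𝒟⁻_1, 𝒟⁻_k] = 𝒟⁻_{k+1} for all k ∈ ℕ. -/

import Mathlib

open Polynomial

/-!
Both sides are subspaces of `ℂ[X]`. Conjugating by `w ↦ -w` swaps the shifts `± k/2` and `± 1/2`
in a bracket, which shows that every bracket has parity `k`. Conversely, for every `n` of the
parity of `k` the bracket of `t` with `t^k (D + k/2)^{n+1}` is
`(X - 1/2)^{n+1} - (X + 1/2)^{n+1}`, a polynomial of degree exactly `n`; subtracting multiples of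
these removes leading terms one at a time, so they span the parity-`k` polynomials.
-/

/-- In the graded Lie algebra `𝒟⁻` with degree-`k` piece
`{t^k g(D + k/2) : g(-w) = (-1)^{k+1} g(w)}`, the bracket of the degree-1 element
`t h₁(D + 1/2)` (`h₁` even) and the degree-`k` element `t^k h₂(D + k/2)` is
`t^{k+1} q(D + (k+1)/2)` with `q` as follows. -/
noncomputable def brPoly1k (k : ℤ) (h₁ h₂ : Polynomial ℂ) : Polynomial ℂ :=
  h₁.comp (X + C ((k : ℂ) / 2)) * h₂.comp (X - C (1 / 2 : ℂ)) -
    h₁.comp (X - C ((k : ℂ) / 2)) * h₂.comp (X + C (1 / 2 : ℂ))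

namespace Polynomial

section Field

variable {K : Type*} [Field K]

theorem le_of_forall_exists_degree_eq {P S : Submodule K K[X]} (hSP : S ≤ P)
    (h : ∀ q ∈ P, q ≠ 0 → ∃ s ∈ S, s.degree = q.degree) : P ≤ S := by
  intro q hq
  induction hd : q.natDegree using Nat.strong_induction_on generalizing q with
  | _ d ih =>
  rcases eq_or_ne q 0 with rfl | hq0
  · exact S.zero_mem
  obtain ⟨s, hs, hdeg⟩ := h q hq hq0
  have hs0 : s ≠ 0 := fun hs0 => hq0 (degree_eq_bot.1 (by rw [← hdeg, hs0, degree_zero]))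
  set c := q.leadingCoeff / s.leadingCoeff
  have hc : IsUnit c :=
    (div_ne_zero (leadingCoeff_ne_zero.2 hq0) (leadingCoeff_ne_zero.2 hs0)).isUnit
  have hlt : (q - c • s).degree < q.degree := by
    refine degree_sub_lt_left ?_ hq0 ?_
    · rw [smul_eq_C_mul, degree_C_mul hc.ne_zero, hdeg]
    · rw [smul_eq_C_mul, leadingCoeff_C_mul_of_isUnit hc,
        div_mul_cancel₀ _ (leadingCoeff_ne_zero.2 hs0)]
  have hrem : q - c • s ∈ S := by
    rcases eq_or_ne (q - c • s) 0 with h0 | h0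
    · rw [h0]; exact S.zero_mem
    exact ih _ (hd ▸ natDegree_lt_natDegree h0 hlt) (P.sub_mem hq (P.smul_mem c (hSP hs))) rfl
  simpa using S.add_mem hrem (S.smul_mem c hs)

variable (K) in
/-- `K[w]^{(k̄)}`: the polynomials `q` with `q(-w) = (-1)^k q(w)`. -/
def paritySubmodule (k : ℤ) : Submodule K K[X] where
  carrier := {q | q.comp (-X) = (-1 : K) ^ k • q}
  add_mem' {p q} hp hq := by simp_all [add_comp, smul_add]
  zero_mem' := by simp
  smul_mem' c q hq := by simp_all [smul_comp, smul_comm c]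

theorem mem_paritySubmodule {k : ℤ} {q : K[X]} :
    q ∈ paritySubmodule K k ↔ q.comp (-X) = (-1 : K) ^ k • q := Iff.rfl

theorem neg_one_pow_natDegree_of_mem_paritySubmodule {k : ℤ} {q : K[X]}
    (hq : q ∈ paritySubmodule K k) (hq0 : q ≠ 0) : (-1 : K) ^ q.natDegree = (-1 : K) ^ k := by
  have hlc := congrArg leadingCoeff (mem_paritySubmodule.1 hq)
  rw [comp_neg_X_leadingCoeff_eq, smul_eq_C_mul, leadingCoeff_C_mul_of_isUnit
    ((zpow_ne_zero k (neg_ne_zero.2 one_ne_zero)).isUnit)] at hlc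
  exact mul_right_cancel₀ (leadingCoeff_ne_zero.2 hq0) hlc

theorem X_pow_mem_paritySubmodule {k : ℤ} {n : ℕ} (h : (-1 : K) ^ n = (-1 : K) ^ k) :
    X ^ n ∈ paritySubmodule K k := by
  rw [mem_paritySubmodule, X_pow_comp, neg_pow, ← h, smul_eq_C_mul, C_pow, C_neg, C_1]

theorem degree_X_add_C_pow_sub_X_add_C_pow [CharZero K] {a b : K} (hab : a ≠ b) (n : ℕ) :
    ((X + C a) ^ (n + 1) - (X + C b) ^ (n + 1)).degree = (n : WithBot ℕ) := by
  refine degree_eq_of_le_of_coeff_ne_zero ?_ ?_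
  · have hmonic (r : K) : (X + C r) ^ (n + 1) |>.Monic := (monic_X_add_C r).pow _
    have hdeg (r : K) : ((X + C r) ^ (n + 1)).degree = ((n + 1 : ℕ) : WithBot ℕ) := by simp
    have := degree_sub_lt_left ((hdeg a).trans (hdeg b).symm) (hmonic a).ne_zero
      ((hmonic a).leadingCoeff.trans (hmonic b).leadingCoeff.symm)
    rw [hdeg, Nat.cast_succ] at this
    exact Order.le_of_lt_succ this
  · rw [coeff_sub, coeff_X_add_C_pow, coeff_X_add_C_pow, Nat.add_sub_cancel_left, pow_one,
      pow_one, Nat.choose_succ_self_right, ← sub_mul]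
    exact mul_ne_zero (sub_ne_zero.2 hab) (Nat.cast_ne_zero.2 n.succ_ne_zero)

end Field

theorem comp_X_add_C_comp_neg_X {R : Type*} [CommRing R] (h : R[X]) (c : R) :
    (h.comp (X + C c)).comp (-X) = (h.comp (-X)).comp (X - C c) := by
  simp only [comp_assoc, add_comp, neg_comp, X_comp, C_comp]
  ring_nf

theorem comp_X_sub_C_comp_neg_X {R : Type*} [CommRing R] (h : R[X]) (c : R) :
    (h.comp (X - C c)).comp (-X) = (h.comp (-X)).comp (X + C c) := by
  simp only [comp_assoc, neg_comp, sub_comp, X_comp, C_comp]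
  ring_nf

end Polynomial

theorem brPoly1k_mem_paritySubmodule (k : ℤ) {h₁ h₂ : ℂ[X]} (h₁_even : h₁.comp (-X) = h₁)
    (h₂_mem : h₂ ∈ paritySubmodule ℂ (k + 1)) : brPoly1k k h₁ h₂ ∈ paritySubmodule ℂ k := by
  rw [mem_paritySubmodule] at h₂_mem ⊢
  simp only [brPoly1k, sub_comp, mul_comp, comp_X_add_C_comp_neg_X, comp_X_sub_C_comp_neg_X,
    h₁_even, h₂_mem, smul_comp, zpow_add_one₀ (by norm_num : (-1 : ℂ) ≠ 0), mul_smul_comm]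
  module

theorem brPoly1k_one_X_pow (k : ℤ) (n : ℕ) :
    brPoly1k k 1 (X ^ n) = (X - C (1 / 2 : ℂ)) ^ n - (X + C (1 / 2 : ℂ)) ^ n := by
  simp [brPoly1k]

/-- The brackets spanning `[𝒟⁻_1, 𝒟⁻_k]`, in the normalization of `brPoly1k`. -/
def bracketSet (k : ℤ) : Set ℂ[X] :=
  {q' | ∃ h₁ h₂ : ℂ[X], h₁.comp (-X) = h₁ ∧ h₂.comp (-X) = (-1 : ℂ) ^ (k + 1) • h₂ ∧
    q' = brPoly1k k h₁ h₂}

theorem span_bracketSet_le (k : ℤ) : Submodule.span ℂ (bracketSet k) ≤ paritySubmodule ℂ k :=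
  Submodule.span_le.2 fun _ ⟨_, _, h₁_even, h₂_mem, hq⟩ =>
    hq ▸ brPoly1k_mem_paritySubmodule k h₁_even h₂_mem

/-- The witness is the bracket `[t, t^k (D + k/2)^{n+1}]`, that is,
`(X - 1/2)^{n+1} - (X + 1/2)^{n+1}`. -/
theorem exists_mem_bracketSet_degree_eq (k : ℤ) {q : ℂ[X]} (hq : q ∈ paritySubmodule ℂ k)
    (hq0 : q ≠ 0) : ∃ s ∈ bracketSet k, s.degree = q.degree := by
  set n := q.natDegree
  have hX : X ^ (n + 1) ∈ paritySubmodule ℂ (k + 1) := by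
    refine X_pow_mem_paritySubmodule ?_
    rw [pow_succ, zpow_add_one₀ (by norm_num : (-1 : ℂ) ≠ 0),
      neg_one_pow_natDegree_of_mem_paritySubmodule hq hq0]
  refine ⟨_, ⟨1, _, one_comp, hX, rfl⟩, ?_⟩
  rw [brPoly1k_one_X_pow, sub_eq_add_neg X, ← C_neg, degree_eq_natDegree hq0]
  exact degree_X_add_C_pow_sub_X_add_C_pow (by norm_num) n

theorem span_bracketSet (k : ℤ) : Submodule.span ℂ (bracketSet k) = paritySubmodule ℂ k :=
  le_antisymm (span_bracketSet_le k) <| le_of_forall_exists_degree_eq (span_bracketSet_le k)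
    fun _ hq hq0 =>
      let ⟨s, hs, hdeg⟩ := exists_mem_bracketSet_degree_eq k hq hq0
      ⟨s, Submodule.subset_span hs, hdeg⟩

theorem Dminus_degree_one_brackets_generate_general (k : ℤ) :
    ∀ q : Polynomial ℂ,
      q ∈ Submodule.span ℂ {q' : Polynomial ℂ | ∃ h₁ h₂ : Polynomial ℂ,
        h₁.comp (-X) = h₁ ∧ h₂.comp (-X) = (-1 : ℂ) ^ (k + 1) • h₂ ∧
        q' = brPoly1k k h₁ h₂} ↔
      q.comp (-X) = (-1 : ℂ) ^ k • q :=
  SetLike.ext_iff.1 (span_bracketSet k)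

/-- `[𝒟⁻_1, 𝒟⁻_k] = 𝒟⁻_{k+1}` for all `k ∈ ℕ`: the span of the bracket
polynomials is exactly the space of polynomials of parity `(k+1)+1 ≡ k` . -/
theorem Dminus_degree_one_brackets_generate (k : ℤ) (hk : 1 ≤ k) :
    ∀ q : Polynomial ℂ,
      q ∈ Submodule.span ℂ {q' : Polynomial ℂ | ∃ h₁ h₂ : Polynomial ℂ,
        h₁.comp (-X) = h₁ ∧ h₂.comp (-X) = (-1 : ℂ) ^ (k + 1) • h₂ ∧
        q' = brPoly1k k h₁ h₂} ↔
      q.comp (-X) = (-1 : ℂ) ^ k • q :=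
  Dminus_degree_one_brackets_generate_general k
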